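/- arXiv:2002.07739 — 3 statements merged into one kernel-verified Lean document; each statement's English description precedes it below -/
import Mathlib

section
/- In a lexicographically ordered binary tree (A, <, <_s), for all x, y in A, x is simpler than y (x <_s y) if and only if every element simpler than x that is less than x is less than y, every element simpler than x that is greater than x is greater than y, and y ≠ x. -/
/-! Lexicographically ordered binary trees, following Ehrlich.
`slt` is the "simpler than" tree order, `lt` the total order. -/

variable {A : Type*}

/-- `y` is an immediate successor of `x` in the tree order `slt`:
`x` is simpler than `y` and every element simpler than `y` is `x` or simpler than `x`. -/
def ImmSucc (slt : A → A → Prop) (x y : A) : Prop :=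
  slt x y ∧ ∀ z, slt z y → z = x ∨ slt z x

/-- A chain with respect to the tree order. -/
def IsSltChain (slt : A → A → Prop) (C : Set A) : Prop :=
  ∀ a ∈ C, ∀ b ∈ C, a = b ∨ slt a b ∨ slt b a

/-- A chain of limit length: a chain with no maximal element (this includes the empty chain). -/
def LimitChain (slt : A → A → Prop) (C : Set A) : Prop :=
  IsSltChain slt C ∧ ∀ a ∈ C, ∃ b ∈ C, slt a b

/-- `y` is an immediate successor of the chain `C`: every member of `C` is simpler than `y`,
and every element simpler than `y` lies below some member of `C`. -/
def ChainImmSucc (slt : A → A → Prop) (C : Set A) (y : A) : Prop :=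
  (∀ a ∈ C, slt a y) ∧ ∀ z, slt z y → ∃ a ∈ C, z = a ∨ slt z a

/-- A lexicographically ordered binary tree: `slt` is a tree partial order with well-ordered
sets of predecessors, `lt` is a strict total order, the lexicographic condition links the two,
and the tree is binary (each element has at most two immediate successors, each chain of
limit length has at most one immediate successor). -/
structure LexBinaryTree (slt lt : A → A → Prop) : Prop where
  slt_trans : ∀ {x y z : A}, slt x y → slt y z → slt x z
  slt_wf : WellFounded slt
  pred_linear : ∀ {a b x : A}, slt a x → slt b x → a = b ∨ slt a b ∨ slt b a
  lt_trans : ∀ {x y z : A}, lt x y → lt y z → lt x z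
  lt_irrefl : ∀ x : A, ¬ lt x x
  lt_trichot : ∀ x y : A, lt x y ∨ x = y ∨ lt y x
  lex : ∀ x y : A, (x ≠ y ∧ ¬ slt x y ∧ ¬ slt y x) ↔
      ∃ z, slt z x ∧ slt z y ∧ (lt x z ∧ lt z y ∨ lt y z ∧ lt z x)
  binary_succ : ∀ x y₁ y₂ y₃ : A, ImmSucc slt x y₁ → ImmSucc slt x y₂ → ImmSucc slt x y₃ →
      y₁ = y₂ ∨ y₁ = y₃ ∨ y₂ = y₃
  binary_limit : ∀ (C : Set A) (y₁ y₂ : A), LimitChain slt C →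
      ChainImmSucc slt C y₁ → ChainImmSucc slt C y₂ → y₁ = y₂

/-! If `x <_s y`, a predecessor of `x` is also one of `y`, so by the lexicographic axiom it cannot
lie between `x` and `y`; this fixes on which side of `y` it lies. Conversely, if `y ≠ x` lies on the
prescribed side of every predecessor of `x`, then `y` is not itself a predecessor of `x`, and if
`x`, `y` were incomparable, the common predecessor between them would be a predecessor of `x` on the
wrong side of `y`. -/

namespace LexBinaryTree

variable {slt lt : A → A → Prop} (T : LexBinaryTree slt lt) {a x y z : A}
include T

theorem slt_irrefl (x : A) : ¬ slt x x :=
  T.slt_wf.irrefl.irrefl x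

theorem ne_of_slt (h : slt x y) : x ≠ y := by
  rintro rfl
  exact T.slt_irrefl x h

theorem lt_asymm (h : lt x y) : ¬ lt y x :=
  fun h' => T.lt_irrefl x (T.lt_trans h h')

theorem not_slt_of_between (hzx : slt z x) (hzy : slt z y)
    (hbetween : lt x z ∧ lt z y ∨ lt y z ∧ lt z x) : ¬ slt x y :=
  fun hxy => ((T.lex x y).2 ⟨z, hzx, hzy, hbetween⟩).2.1 hxy

theorem lt_of_slt_of_lt (hxy : slt x y) (hax : slt a x) (hlt : lt a x) : lt a y := by
  have hay : slt a y := T.slt_trans hax hxy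
  rcases T.lt_trichot a y with h | rfl | h
  · exact h
  · exact absurd hay (T.slt_irrefl a)
  · exact absurd hxy (T.not_slt_of_between hax hay (.inr ⟨h, hlt⟩))

theorem lt_of_slt_of_gt (hxy : slt x y) (hax : slt a x) (hlt : lt x a) : lt y a := by
  have hay : slt a y := T.slt_trans hax hxy
  rcases T.lt_trichot y a with h | rfl | h
  · exact h
  · exact absurd hay (T.slt_irrefl y)
  · exact absurd hxy (T.not_slt_of_between hax hay (.inl ⟨hlt, h⟩))

section Options

variable (hL : ∀ a, slt a x → lt a x → lt a y) (hR : ∀ a, slt a x → lt x a → lt y a)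
include hL hR

theorem not_slt_of_between_options (hne : y ≠ x) : ¬ slt y x := by
  intro hyx
  rcases T.lt_trichot y x with h | h | h
  · exact T.lt_irrefl y (hL y hyx h)
  · exact hne h
  · exact T.lt_irrefl y (hR y hyx h)

theorem slt_of_between_options (hne : y ≠ x) : slt x y := by
  by_contra hxy
  obtain ⟨z, hzx, -, hbetween⟩ :=
    (T.lex x y).1 ⟨hne.symm, hxy, T.not_slt_of_between_options hL hR hne⟩
  rcases hbetween with ⟨hxz, hzy⟩ | ⟨hyz, hzx'⟩
  · exact T.lt_asymm hzy (hR z hzx hxz)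
  · exact T.lt_asymm (hL z hzx hzx') hyz

end Options

end LexBinaryTree

/-- In a lexicographically ordered binary tree, `x <_s y` iff every left (`lt x`)
predecessor of `x` is below `y`, every right predecessor of `x` is above `y`, and `y ≠ x`. -/
theorem simpler_iff_between_options {slt lt : A → A → Prop}
    (T : LexBinaryTree slt lt) (x y : A) :
    slt x y ↔ ((∀ a, slt a x → lt a x → lt a y) ∧ (∀ a, slt a x → lt x a → lt y a) ∧ y ≠ x) :=
  ⟨fun hxy => ⟨fun _ => T.lt_of_slt_of_lt hxy, fun _ => T.lt_of_slt_of_gt hxy,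
      (T.ne_of_slt hxy).symm⟩,
    fun ⟨hL, hR, hne⟩ => T.slt_of_between_options hL hR hne⟩
end

section
/- Let Γ be a divisible ordered abelian group, Δ a divisible subgroup of Γ, S an ordered set, and ι : Δ → ℝ((t^S)) a truncation closed, cross sectional ordered group embedding into the Hahn group of real-coefficient formal series over S. Then for any x, y in Γ \ Δ realizing the same cut over Δ, the (maximal) developments of x and y over Δ with respect to ι are equal. -/
open scoped Classical

/-! Hahn groups `ℝ((t^S))` over a linearly ordered set `S`, realized as `HahnSeries Sᵒᵈ ℝ`
(exponents are dualized so that the decreasing series of the classical notation have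
well-ordered support), together with developments of elements of an ordered abelian
group `Γ` over a subgroup `Δ` embedded in the Hahn group. -/

variable {S : Type*} [LinearOrder S] {Γ : Type*} [AddCommGroup Γ] [LinearOrder Γ] [IsOrderedAddMonoid Γ]

/-- `a ≺ b` : `n|a| < |b|` for every natural number `n`. -/
def GPrec (a b : Γ) : Prop := ∀ n : ℕ, n • |a| < |b|

/-- `a ⪯ b` : `|a| < n|b|` for some natural number `n`. -/
def GPreceq (a b : Γ) : Prop := ∃ n : ℕ, |a| < n • |b|

/-- Archimedean equivalence. -/
def GEquiv (a b : Γ) : Prop := GPreceq a b ∧ GPreceq b a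

/-- A Hahn series is positive when its leading coefficient is positive. -/
def HPosS (h : HahnSeries Sᵒᵈ ℝ) : Prop :=
  ∃ g, 0 < h.coeff g ∧ ∀ g' < g, h.coeff g' = 0

/-- The (lexicographic) ordering of the Hahn group. -/
def HLtS (h k : HahnSeries Sᵒᵈ ℝ) : Prop := HPosS (k - h)

/-- `d` is a truncation (initial segment of terms) of the Hahn series `h`. -/
def IsTruncS (d h : HahnSeries Sᵒᵈ ℝ) : Prop :=
  ∃ U : Set S, IsUpperSet U ∧
    ∀ s : S, d.coeff (OrderDual.toDual s) = if s ∈ U then h.coeff (OrderDual.toDual s) else 0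

/-- The truncation of `z` keeping all terms with exponent `≥ s`. -/
noncomputable def truncFrom (z : HahnSeries Sᵒᵈ ℝ) (s : S) : HahnSeries Sᵒᵈ ℝ where
  coeff g := if s ≤ OrderDual.ofDual g then z.coeff g else 0
  isPWO_support' := z.isPWO_support.mono (fun g hg => by
    simp only [Function.mem_support] at hg ⊢
    intro h0
    apply hg
    simp [h0])

variable (Δ : AddSubgroup Γ) (ι : Δ → HahnSeries Sᵒᵈ ℝ)

/-- `ι` is a truncation closed, cross sectional ordered group embedding of `Δ`
into the Hahn group. -/
structure GoodEmbedding : Prop where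
  add : ∀ a b : Δ, ι (a + b) = ι a + ι b
  mono : ∀ a b : Δ, ((a : Γ) < b ↔ HLtS (ι a) (ι b))
  trunc_closed : ∀ (d : Δ) (w : HahnSeries Sᵒᵈ ℝ), IsTruncS w (ι d) → ∃ d' : Δ, ι d' = w
  cross : ∀ s : S, ∃ d : Δ, ι d = HahnSeries.single (OrderDual.toDual s) 1

/-- `z` is a partial development of `y` over `Δ` with respect to `ι`. -/
def IsPartialDev (y : Γ) (z : HahnSeries Sᵒᵈ ℝ) : Prop :=
  ∀ s : S, z.coeff (OrderDual.toDual s) ≠ 0 →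
    ∃ d e : Δ, ι d = truncFrom z s ∧ ι e = HahnSeries.single (OrderDual.toDual s) 1 ∧
      GPrec ((d : Γ) - y) (e : Γ)

/-- `z` is the (maximal) development of `y` over `Δ` with respect to `ι`. -/
def IsDevelopment (y : Γ) (z : HahnSeries Sᵒᵈ ℝ) : Prop :=
  IsPartialDev Δ ι y z ∧ ∀ z', IsPartialDev Δ ι y z' → IsTruncS z' z

/-! The development of `x` is read off from the elements `d ∈ Δ` with `d - x ≺ e` for some
`e ∈ Δ`. Dividing `|e|` in `Δ` turns `d - x ≺ e` into the family of bounds `|d - x| < |e| / n`,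
and such a bound only depends on where `x` lies relative to the elements `d ± |e| / n` of `Δ`,
that is, on the cut of `x` (up to weakening `<` to `≤`, which `≺` absorbs). So `x` and `y`
have the same partial developments, and the two maximal ones are truncations of each other. -/

theorem IsTruncS.antisymm {a b : HahnSeries Sᵒᵈ ℝ} (hab : IsTruncS a b) (hba : IsTruncS b a) :
    a = b := by
  obtain ⟨U, -, hU⟩ := hab
  obtain ⟨V, -, hV⟩ := hba
  ext g
  have hUg := hU (OrderDual.ofDual g)
  have hVg := hV (OrderDual.ofDual g)
  split_ifs at hUg hVg
  exacts [hUg, hUg, hVg.symm, hUg.trans hVg.symm]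

theorem AddSubgroup.abs_mem {G : Type*} [AddGroup G] [LinearOrder G] {H : AddSubgroup G} {a : G}
    (ha : a ∈ H) : |a| ∈ H := by
  rcases abs_choice a with h | h <;> rw [h]
  exacts [ha, H.neg_mem ha]

theorem GPrec.abs_lt_of_nsmul_eq {a b c : Γ} {n : ℕ} (h : GPrec a b) (hc : n • c = |b|) :
    |a| < c :=
  lt_of_nsmul_lt_nsmul_right n (hc ▸ h n)

theorem gprec_of_forall_abs_le {a b : Γ} (hb : b ≠ 0)
    (h : ∀ n : ℕ, ∃ c, (n + 1) • c = |b| ∧ |a| ≤ c) : GPrec a b := by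
  intro n
  obtain ⟨c, hc, hac⟩ := h n
  have hc_pos : 0 < c := (nsmul_pos_iff n.succ_ne_zero).mp (hc ▸ abs_pos.mpr hb)
  calc n • |a| ≤ n • c := nsmul_le_nsmul_right hac n
    _ < (n + 1) • c := nsmul_lt_nsmul_left hc_pos n.lt_succ_self
    _ = |b| := hc

def SameCut {G : Type*} [AddGroup G] [LT G] (H : AddSubgroup G) (x y : G) : Prop :=
  ∀ d : H, ((d : G) < x ↔ (d : G) < y)

theorem SameCut.symm {G : Type*} [AddGroup G] [LT G] {H : AddSubgroup G} {x y : G}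
    (h : SameCut H x y) : SameCut H y x :=
  fun d => (h d).symm

variable {Δ}

theorem SameCut.abs_sub_le {x y : Γ} (h : SameCut Δ x y) (d c : Δ)
    (hx : |(d : Γ) - x| < c) : |(d : Γ) - y| ≤ c := by
  obtain ⟨hlow, hhigh⟩ := abs_sub_lt_iff.mp hx
  have hlow' : ((d - c : Δ) : Γ) < y := (h (d - c)).mp (by simpa using sub_lt_comm.mp hlow)
  have hhigh' : ¬ ((d + c : Δ) : Γ) < y :=
    (h (d + c)).not.mp (not_lt.mpr (by simpa using (sub_lt_iff_lt_add'.mp hhigh).le))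
  push_cast at hlow' hhigh'
  exact abs_sub_le_iff.mpr ⟨sub_le_comm.mpr hlow'.le, sub_le_iff_le_add'.mpr (not_lt.mp hhigh')⟩

theorem SameCut.gprec_sub {x y : Γ} (hΔdiv : ∀ n : ℕ, 0 < n → ∀ d ∈ Δ, ∃ d' ∈ Δ, n • d' = d)
    (h : SameCut Δ x y) {d e : Δ} (hx : GPrec ((d : Γ) - x) e) : GPrec ((d : Γ) - y) e := by
  have he : (e : Γ) ≠ 0 := abs_pos.mp ((abs_nonneg _).trans_lt (by simpa using hx 1))
  refine gprec_of_forall_abs_le he fun n => ?_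
  obtain ⟨c, hcΔ, hc⟩ := hΔdiv (n + 1) n.succ_pos |(e : Γ)| (Δ.abs_mem e.2)
  exact ⟨c, hc, h.abs_sub_le d ⟨c, hcΔ⟩ (hx.abs_lt_of_nsmul_eq hc)⟩

theorem SameCut.isPartialDev {x y : Γ}
    (hΔdiv : ∀ n : ℕ, 0 < n → ∀ d ∈ Δ, ∃ d' ∈ Δ, n • d' = d)
    (h : SameCut Δ x y) {z : HahnSeries Sᵒᵈ ℝ} (hz : IsPartialDev Δ ι x z) :
    IsPartialDev Δ ι y z := fun s hs => by
  obtain ⟨d, e, hd, he, hde⟩ := hz s hs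
  exact ⟨d, e, hd, he, h.gprec_sub hΔdiv hde⟩

theorem development_depends_only_on_cut
    (hΔdiv : ∀ n : ℕ, 0 < n → ∀ d ∈ Δ, ∃ d' ∈ Δ, n • d' = d)
    (hι : GoodEmbedding Δ ι)
    (x y : Γ)
    (hcut : ∀ d : Δ, ((d : Γ) < x ↔ (d : Γ) < y)) :
    ∀ zx zy : HahnSeries Sᵒᵈ ℝ,
      IsDevelopment Δ ι x zx → IsDevelopment Δ ι y zy → zx = zy := by
  intro zx zy hzx hzy
  have hcut : SameCut Δ x y := hcut
  exact IsTruncS.antisymm (hzy.2 zx (hcut.isPartialDev ι hΔdiv hzx.1))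
    (hzx.2 zy (hcut.symm.isPartialDev ι hΔdiv hzy.1))
end

section
/- Let K be an ordered exponential field satisfying conditions (i)-(v) above with Γ a set. If Δ is a log-subspace of Γ, then there exists a smallest log-exp-subspace of Γ containing Δ. -/
open scoped Classical

/-! Ordered exponential fields realized as truncation closed, cross sectional subfields
`K` of a Hahn field `ℝ((t^Γ))`, here `HahnSeries Γᵒᵈ ℝ` (exponents dualized so that the
classical decreasing-exponent series have well-ordered supports; thus an exponent
`γ : Γ` is accessed through `OrderDual.toDual γ`). -/

variable {Γ : Type*} [AddCommGroup Γ] [LinearOrder Γ] [IsOrderedAddMonoid Γ] [Module ℝ Γ]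

/-- A Hahn series is positive when its leading coefficient is positive. -/
def HPosG (h : HahnSeries Γᵒᵈ ℝ) : Prop :=
  ∃ g, 0 < h.coeff g ∧ ∀ g' < g, h.coeff g' = 0

/-- The ordering of the Hahn field. -/
def HLtG (h k : HahnSeries Γᵒᵈ ℝ) : Prop := HPosG (k - h)

/-- Absolute value. -/
noncomputable def HAbs (h : HahnSeries Γᵒᵈ ℝ) : HahnSeries Γᵒᵈ ℝ :=
  if HPosG (-h) then -h else h

/-- `x ≺ y`. -/
def HPrec (x y : HahnSeries Γᵒᵈ ℝ) : Prop := ∀ n : ℕ, HLtG (n • HAbs x) (HAbs y)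

/-- `x ⪯ y`. -/
def HPreceq (x y : HahnSeries Γᵒᵈ ℝ) : Prop := ∃ n : ℕ, HLtG (HAbs x) (n • HAbs y)

/-- Archimedean equivalence `x ≍ y`. -/
def HEquiv (x y : HahnSeries Γᵒᵈ ℝ) : Prop := HPreceq x y ∧ HPreceq y x

/-- `x` is infinite: `x ≻ 1`. -/
def HInf (x : HahnSeries Γᵒᵈ ℝ) : Prop := HPrec 1 x

/-- The monomial `t^γ`. -/
noncomputable def HMono (γ : Γ) : HahnSeries Γᵒᵈ ℝ :=
  HahnSeries.single (OrderDual.toDual γ) 1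

/-- All exponents of `x` lie in `Δ`. -/
def SuppIn (Δ : Set Γ) (x : HahnSeries Γᵒᵈ ℝ) : Prop :=
  ∀ g, x.coeff g ≠ 0 → OrderDual.ofDual g ∈ Δ

/-- `x` is purely infinite: all its exponents are strictly positive. -/
def HPurelyInf (x : HahnSeries Γᵒᵈ ℝ) : Prop :=
  ∀ g, x.coeff g ≠ 0 → 0 < OrderDual.ofDual g

/-- `d` is a truncation (initial segment of terms) of the Hahn series `h`. -/
def IsTruncG (d h : HahnSeries Γᵒᵈ ℝ) : Prop :=
  ∃ U : Set Γ, IsUpperSet U ∧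
    ∀ s : Γ, d.coeff (OrderDual.toDual s) = if s ∈ U then h.coeff (OrderDual.toDual s) else 0

variable (K : Subfield (HahnSeries Γᵒᵈ ℝ)) (expK logK : HahnSeries Γᵒᵈ ℝ → HahnSeries Γᵒᵈ ℝ)

/-- The coefficient field `ℝ_K` of `K`. -/
def RK : Set ℝ := {r : ℝ | HahnSeries.C r ∈ K}

/-- `K` is an ordered exponential field which is a truncation closed, cross sectional
subfield of `ℝ((t^Γ))`, satisfying conditions (i)–(v):  `exp_K` agrees with `e^x` on the
coefficient field and with the exponential power series on infinitesimals, `exp_K x > x^n`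
for positive infinite `x`, and `log_K(t^Γ) = K_PI`. -/
structure GoodExpField : Prop where
  trunc_closed : ∀ x ∈ K, ∀ d, IsTruncG d x → d ∈ K
  cross : ∀ γ : Γ, HMono γ ∈ K
  exp_mem : ∀ x ∈ K, expK x ∈ K
  log_mem : ∀ x ∈ K, HLtG 0 x → logK x ∈ K
  exp_add : ∀ x ∈ K, ∀ y ∈ K, expK (x + y) = expK x * expK y
  exp_pos : ∀ x ∈ K, HLtG 0 (expK x)
  exp_mono : ∀ x ∈ K, ∀ y ∈ K, HLtG x y → HLtG (expK x) (expK y)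
  log_exp : ∀ x ∈ K, logK (expK x) = x
  exp_log : ∀ x ∈ K, HLtG 0 x → expK (logK x) = x
  exp_real : ∀ r : ℝ, HahnSeries.C r ∈ K → expK (HahnSeries.C r) = HahnSeries.C (Real.exp r)
  exp_series : ∀ x ∈ K, HPrec x 1 → x ≠ 0 → ∀ N : ℕ,
    HPrec (expK x - ∑ i ∈ Finset.range (N + 1), ((Nat.factorial i : ℝ)⁻¹) • x ^ i) (x ^ N)
  exp_big : ∀ x ∈ K, HLtG 0 x → HInf x → ∀ n : ℕ, HLtG (x ^ n) (expK x)
  log_pi₁ : ∀ γ : Γ, HPurelyInf (logK (HMono γ))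
  log_pi₂ : ∀ x ∈ K, HPurelyInf x → ∃ γ : Γ, logK (HMono γ) = x

/-- `Δ` is an `ℝ_K`-subspace of `Γ`. -/
def IsRKSubspace (Δ : Set Γ) : Prop :=
  (0 : Γ) ∈ Δ ∧ (∀ a ∈ Δ, ∀ b ∈ Δ, a + b ∈ Δ) ∧ (∀ a ∈ Δ, -a ∈ Δ) ∧
    ∀ r ∈ RK K, ∀ a ∈ Δ, r • a ∈ Δ

/-- `Δ` is a log-subspace of `Γ` : `log_K(t^Δ) ⊆ (K_Δ)_PI`. -/
def IsLogSubspace (Δ : Set Γ) : Prop :=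
  IsRKSubspace K Δ ∧ ∀ γ ∈ Δ,
    logK (HMono γ) ∈ K ∧ SuppIn Δ (logK (HMono γ)) ∧ HPurelyInf (logK (HMono γ))

/-- `Δ` is a log-exp-subspace of `Γ` : `log_K(t^Δ) = (K_Δ)_PI`. -/
def IsLogExpSubspace (Δ : Set Γ) : Prop :=
  IsLogSubspace K logK Δ ∧
    ∀ x ∈ K, SuppIn Δ x → HPurelyInf x → ∃ γ ∈ Δ, logK (HMono γ) = x

/-- `d` is the development of `z` over `K_Δ` (the longest truncation of `z` lying
in `K_Δ`). -/
def IsDevKDelta (Δ : Set Γ) (z d : HahnSeries Γᵒᵈ ℝ) : Prop :=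
  IsTruncG d z ∧ d ∈ K ∧ SuppIn Δ d ∧
    ∀ d', IsTruncG d' z → d' ∈ K → SuppIn Δ d' → IsTruncG d' d

/-! Log-exp-subspaces are closed under intersections of nonempty families, and `Γ` itself is
one; so the intersection of all log-exp-subspaces containing `Δ` is the smallest one.  The
only point needing care is the surjectivity half: an `x ∈ (K_{⋂ S})_PI` is `log_K t^γ` for
some `γ` in each member, and injectivity of `γ ↦ log_K t^γ` makes these `γ` all equal. -/

omit [AddCommGroup Γ] [IsOrderedAddMonoid Γ] [Module ℝ Γ] in
lemma hMono_pos (γ : Γ) : HLtG 0 (HMono γ) := by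
  refine ⟨OrderDual.toDual γ, by simp [HMono], fun g hg => ?_⟩
  simp [HMono, HahnSeries.coeff_single_of_ne hg.ne]

omit [AddCommGroup Γ] [IsOrderedAddMonoid Γ] [Module ℝ Γ] in
lemma hMono_injective : Function.Injective (HMono : Γ → HahnSeries Γᵒᵈ ℝ) := by
  intro γ γ' h
  by_contra hne
  have := congrArg (fun x : HahnSeries Γᵒᵈ ℝ => x.coeff (OrderDual.toDual γ)) h
  simp [HMono, hne] at this

omit [Module ℝ Γ] in
lemma GoodExpField.logK_hMono_injective (hK : GoodExpField K expK logK) :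
    Function.Injective fun γ : Γ => logK (HMono γ) := by
  intro γ γ' h
  apply hMono_injective
  rw [← hK.exp_log _ (hK.cross γ) (hMono_pos γ), ← hK.exp_log _ (hK.cross γ') (hMono_pos γ')]
  exact congrArg expK h

lemma GoodExpField.isLogExpSubspace_univ (hK : GoodExpField K expK logK) :
    IsLogExpSubspace K logK (Set.univ : Set Γ) := by
  refine ⟨⟨⟨trivial, fun _ _ _ _ => trivial, fun _ _ => trivial, fun _ _ _ _ => trivial⟩,
    fun γ _ => ⟨hK.log_mem _ (hK.cross γ) (hMono_pos γ), fun _ _ => trivial, hK.log_pi₁ γ⟩⟩, ?_⟩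
  intro x hx _ hpi
  obtain ⟨γ, hγ⟩ := hK.log_pi₂ x hx hpi
  exact ⟨γ, trivial, hγ⟩

variable {K logK}

lemma IsRKSubspace.sInter {S : Set (Set Γ)} (hS : ∀ E ∈ S, IsRKSubspace K E) :
    IsRKSubspace K (⋂₀ S) := by
  refine ⟨fun E hE => (hS E hE).1, fun a ha b hb E hE => (hS E hE).2.1 a (ha E hE) b (hb E hE),
    fun a ha E hE => (hS E hE).2.2.1 a (ha E hE), fun r hr a ha E hE => ?_⟩
  exact (hS E hE).2.2.2 r hr a (ha E hE)

lemma IsLogSubspace.sInter {S : Set (Set Γ)} (hne : S.Nonempty)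
    (hS : ∀ E ∈ S, IsLogSubspace K logK E) : IsLogSubspace K logK (⋂₀ S) := by
  refine ⟨IsRKSubspace.sInter fun E hE => (hS E hE).1, fun γ hγ => ?_⟩
  obtain ⟨E₀, hE₀⟩ := hne
  obtain ⟨hmem, -, hpi⟩ := (hS E₀ hE₀).2 γ (hγ E₀ hE₀)
  exact ⟨hmem, fun g hg E hE => ((hS E hE).2 γ (hγ E hE)).2.1 g hg, hpi⟩

lemma IsLogExpSubspace.sInter (hinj : Function.Injective fun γ : Γ => logK (HMono γ))
    {S : Set (Set Γ)} (hne : S.Nonempty) (hS : ∀ E ∈ S, IsLogExpSubspace K logK E) :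
    IsLogExpSubspace K logK (⋂₀ S) := by
  refine ⟨IsLogSubspace.sInter hne fun E hE => (hS E hE).1, fun x hx hsupp hpi => ?_⟩
  have hsuppE : ∀ E ∈ S, SuppIn E x := fun E hE g hg => hsupp g hg E hE
  obtain ⟨E₀, hE₀⟩ := hne
  obtain ⟨γ₀, -, hγ₀⟩ := (hS E₀ hE₀).2 x hx (hsuppE E₀ hE₀) hpi
  refine ⟨γ₀, fun E hE => ?_, hγ₀⟩
  obtain ⟨γ, hγE, hγ⟩ := (hS E hE).2 x hx (hsuppE E hE) hpi
  rwa [← hinj (hγ.trans hγ₀.symm)]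

variable (K logK)

theorem exists_smallest_logExpSubspace
    (hK : GoodExpField K expK logK)
    (Δ : Set Γ) :
    ∃ E : Set Γ, IsLogExpSubspace K logK E ∧ Δ ⊆ E ∧
      ∀ E' : Set Γ, IsLogExpSubspace K logK E' → Δ ⊆ E' → E ⊆ E' := by
  set S : Set (Set Γ) := {E | IsLogExpSubspace K logK E ∧ Δ ⊆ E}
  have hne : S.Nonempty := ⟨Set.univ, hK.isLogExpSubspace_univ, Set.subset_univ Δ⟩
  refine ⟨⋂₀ S, IsLogExpSubspace.sInter hK.logK_hMono_injective hne fun E hE => hE.1,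
    Set.subset_sInter fun E hE => hE.2, fun E' hE' hΔ => Set.sInter_subset_of_mem ⟨hE', hΔ⟩⟩
end
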